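/- Let T be a tree on the vertex set {1,…,n}, not a path, and suppose there exists a labeling such that T is 3-closed. Then there exists a bipartite graph H on {x_1,…,x_n} ⊔ {y_1,…,y_n} with exactly n−1 edges such that: (1) {x_i, y_j} ∈ E(H) implies i < j; (2) for every i ∈ {1,…,n−1}, either {x_i, y_{i+1}} ∈ E(H), or there exists j > i+1 with {x_i, y_j}, {x_{i+1}, y_j} ∈ E(H), or there exists j < i with {x_j, y_i}, {x_j, y_{i+1}} ∈ E(H); and T is isomorphic to the graph H_* on {1,…,n} with edge set {{i,j} : {x_i,y_j} ∈ E(H)}. Conversely, if such an H exists with H_* a tree that is not a path, then H_* admits a labeling in which every admissible path has at most 3 vertices. -/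

import Mathlib

/-- A list of vertices forms a path in `G`: consecutive vertices are adjacent
and all vertices are distinct. -/
def IsPathList {V : Type*} (G : SimpleGraph V) (l : List V) : Prop :=
  l.Chain' G.Adj ∧ l.Nodup

/-- A list of vertices is an *admissible path* in a graph `G` on `{1,…,n}`
(modeled as `Fin n`): it is a path from `i` to `j` with `i < j`, every
interior vertex is `< i` or `> j`, and no proper (ordered) subset of the
interior vertices together with `i` and `j` forms a path in `G`. -/
def IsAdmissible {n : ℕ} (G : SimpleGraph (Fin n)) (l : List (Fin n)) : Prop :=
  ∃ i j : Fin n, i < j ∧ l.head? = some i ∧ l.getLast? = some j ∧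
    IsPathList G l ∧
    (∀ v ∈ l.tail.dropLast, v < i ∨ j < v) ∧
    (∀ l' : List (Fin n), l'.Sublist l.tail.dropLast → l' ≠ l.tail.dropLast →
      ¬ IsPathList G (i :: (l' ++ [j])))


/-- The graph `H_*` on `{1,…,n}` associated to a bipartite graph `H` on
`{x_1,…,x_n} ⊔ {y_1,…,y_n}`, where `H` is encoded as the set `E` of pairs
`(i, j)` with `{x_i, y_j} ∈ E(H)`: its edges are the `{i, j}`. -/
def HstarGraph {n : ℕ} (E : Finset (Fin n × Fin n)) : SimpleGraph (Fin n) :=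
  SimpleGraph.fromEdgeSet ↑(E.image fun p => s(p.1, p.2))

/-- The conditions of Theorem 3.6: (1) `{x_i, y_j} ∈ E(H)` implies `i < j`;
(2) for each `i < n`, `{x_i, y_{i+1}} ∈ E(H)`, or `{x_i, y_j}, {x_{i+1}, y_j}
∈ E(H)` for some `j > i+1`, or `{x_j, y_i}, {x_j, y_{i+1}} ∈ E(H)` for some
`j < i`; (3) `H` has exactly `n − 1` edges. -/
def BipartiteConds {n : ℕ} (E : Finset (Fin n × Fin n)) : Prop :=
  (∀ p ∈ E, p.1 < p.2) ∧
  (∀ i j : Fin n, (j : ℕ) = (i : ℕ) + 1 →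
    ((i, j) ∈ E ∨
     (∃ k : Fin n, (j : ℕ) < (k : ℕ) ∧ (i, k) ∈ E ∧ (j, k) ∈ E) ∨
     (∃ k : Fin n, (k : ℕ) < (i : ℕ) ∧ (k, i) ∈ E ∧ (k, j) ∈ E))) ∧
  E.card = n - 1

/-! Forward direction: relabel `T` by a labeling in which admissible paths have at most three
vertices and orient each edge upwards. A shortest path between consecutive labels `i`, `i + 1`
is admissible, since no label lies strictly between them; so it has at most three vertices,
which is condition (2).

Converse, with the labels of `H_*` kept: an admissible path `i, b, c, …, j` with four or more
vertices has `b` and `c` outside `[i, j]`. The edge `bc` is a bridge of the tree, yet condition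
(2) joins every pair `k, k + 1` inside `[i, j]` by edges at `k` or `k + 1`, which avoid `bc`;
chaining these joins `i` (on the side of `b`) to `j` (on the side of `c`) without `bc`. -/

open Finset SimpleGraph

section

variable {V : Type*} {G : SimpleGraph V}

theorem IsPathList.isChain {l : List V} (h : IsPathList G l) : l.IsChain G.Adj := h.1

theorem List.IsChain.reachable {l : List V} (hl : l.IsChain G.Adj) {u v : V} (hu : u ∈ l)
    (hv : v ∈ l) : G.Reachable u v := by
  classical
  have hne : l ≠ [] := List.ne_nil_of_mem hu
  let w := Walk.ofSupport l hne hl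
  have hsupp : w.support = l := Walk.support_ofSupport hne hl
  rw [← hsupp] at hu hv
  exact (w.takeUntil u hu).reachable.symm.trans (w.takeUntil v hv).reachable

theorem SimpleGraph.Reachable.exists_isPathList_minimal {u v : V} (hr : G.Reachable u v)
    (huv : u ≠ v) :
    ∃ m : List V, IsPathList G (u :: (m ++ [v])) ∧
      ∀ m' : List V, IsPathList G (u :: (m' ++ [v])) → m.length ≤ m'.length := by
  have hex : ∃ m : List V, IsPathList G (u :: (m ++ [v])) := by
    obtain ⟨p, hp⟩ := hr.exists_isPath
    cases p with
    | nil => exact absurd rfl huv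
    | cons hadj q =>
      refine ⟨q.support.dropLast, ?_⟩
      rw [q.dropLast_support_concat]
      exact ⟨(Walk.cons hadj q).isChain_adj_support, hp.support_nodup⟩
  obtain ⟨m, hm, hmin⟩ :=
    (measure List.length).wf.has_min {m | IsPathList G (u :: (m ++ [v]))} hex
  exact ⟨m, hm, fun m' hm' => not_lt.mp (hmin m' hm')⟩

end

section Admissible

variable {n : ℕ} {G : SimpleGraph (Fin n)}

theorem isAdmissible_of_isPathList_minimal {i j : Fin n} {m : List (Fin n)} (hij : i < j)
    (hm : IsPathList G (i :: (m ++ [j]))) (hout : ∀ v ∈ m, v < i ∨ j < v)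
    (hmin : ∀ m' : List (Fin n), IsPathList G (i :: (m' ++ [j])) → m.length ≤ m'.length) :
    IsAdmissible G (i :: (m ++ [j])) := by
  have hint : (i :: (m ++ [j])).tail.dropLast = m := by rw [List.tail_cons, List.dropLast_concat]
  refine ⟨i, j, hij, rfl, by rw [← List.cons_append, List.getLast?_concat], hm, by rwa [hint],
    fun m' hsub hne hpath => ?_⟩
  rw [hint] at hsub hne
  exact hne (hsub.eq_of_length_le (hmin m' hpath))

theorem adj_or_exists_adj_adj_of_succ (h3 : ∀ l, IsAdmissible G l → l.length ≤ 3) {i j : Fin n}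
    (hr : G.Reachable i j) (hij : (j : ℕ) = i + 1) :
    G.Adj i j ∨ (∃ k, j < k ∧ G.Adj i k ∧ G.Adj j k) ∨ (∃ k, k < i ∧ G.Adj k i ∧ G.Adj k j) := by
  have hlt : i < j := Fin.lt_def.mpr (by omega)
  obtain ⟨m, hm, hmin⟩ := hr.exists_isPathList_minimal hlt.ne
  have hout : ∀ v ∈ m, v < i ∨ j < v := fun v hv => by grind [IsPathList]
  have hlen := h3 _ (isAdmissible_of_isPathList_minimal hlt hm hout hmin)
  match m, hm, hout with
  | [], hm, _ => exact Or.inl (List.isChain_pair.mp hm.isChain)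
  | [k], hm, hout =>
    obtain ⟨hik, hkj⟩ : G.Adj i k ∧ G.Adj k j := by
      simpa [List.isChain_cons_cons] using hm.isChain
    rcases hout k (List.mem_singleton_self k) with hk | hk
    · exact Or.inr (Or.inr ⟨k, hk, hik.symm, hkj⟩)
    · exact Or.inr (Or.inl ⟨k, hk, hik, hkj.symm⟩)
  | _ :: _ :: _, _, _ => simp at hlen; omega

end Admissible

section AscendingEdges

variable {V : Type*} [LinearOrder V] [Fintype V]

open Classical in
noncomputable def ascendingEdges (G : SimpleGraph V) : Finset (V × V) :=
  univ.filter fun p => p.1 < p.2 ∧ G.Adj p.1 p.2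

theorem mem_ascendingEdges {G : SimpleGraph V} {p : V × V} :
    p ∈ ascendingEdges G ↔ p.1 < p.2 ∧ G.Adj p.1 p.2 := by
  simp [ascendingEdges]

theorem image_ascendingEdges (G : SimpleGraph V) [Fintype G.edgeSet] :
    (ascendingEdges G).image (fun p => s(p.1, p.2)) = G.edgeFinset := by
  ext z
  induction z using Sym2.ind with
  | _ u v =>
  simp only [mem_image, mem_ascendingEdges, mem_edgeFinset, mem_edgeSet, Prod.exists]
  constructor
  · rintro ⟨a, b, ⟨-, hab⟩, h⟩
    rcases Sym2.eq_iff.mp h with ⟨rfl, rfl⟩ | ⟨rfl, rfl⟩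
    exacts [hab, hab.symm]
  · intro h
    rcases h.ne.lt_or_gt with huv | hvu
    exacts [⟨u, v, ⟨huv, h⟩, rfl⟩, ⟨v, u, ⟨hvu, h.symm⟩, Sym2.eq_swap⟩]

theorem card_ascendingEdges (G : SimpleGraph V) [Fintype G.edgeSet] :
    #(ascendingEdges G) = #G.edgeFinset := by
  rw [← image_ascendingEdges, card_image_of_injOn]
  rintro ⟨a, b⟩ hab ⟨c, d⟩ hcd h
  have hab := (mem_ascendingEdges.mp hab).1
  have hcd := (mem_ascendingEdges.mp hcd).1
  rcases Sym2.eq_iff.mp h with ⟨rfl, rfl⟩ | ⟨rfl, rfl⟩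
  · rfl
  · exact absurd hab hcd.not_gt

end AscendingEdges

theorem hstarGraph_ascendingEdges {n : ℕ} (G : SimpleGraph (Fin n)) :
    HstarGraph (ascendingEdges G) = G := by
  classical
  rw [HstarGraph, image_ascendingEdges, coe_edgeFinset, fromEdgeSet_edgeSet]

theorem bipartiteConds_ascendingEdges {n : ℕ} {G : SimpleGraph (Fin n)} (hG : G.IsTree)
    (h3 : ∀ l, IsAdmissible G l → l.length ≤ 3) : BipartiteConds (ascendingEdges G) := by
  classical
  refine ⟨fun p hp => (mem_ascendingEdges.mp hp).1, fun i j hij => ?_, ?_⟩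
  · simp only [mem_ascendingEdges]
    rcases adj_or_exists_adj_adj_of_succ h3 (hG.connected.preconnected i j) hij with
      h | ⟨k, hk, hik, hjk⟩ | ⟨k, hk, hki, hkj⟩
    · exact Or.inl ⟨by omega, h⟩
    · exact Or.inr (Or.inl ⟨k, hk, ⟨by omega, hik⟩, hk, hjk⟩)
    · exact Or.inr (Or.inr ⟨k, hk, ⟨hk, hki⟩, by omega, hkj⟩)
  · have := hG.card_edgeFinset
    rw [Fintype.card_fin] at this
    rw [card_ascendingEdges]
    omega

section Acyclic

variable {n : ℕ} {G : SimpleGraph (Fin n)}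

theorem reachable_of_forall_reachable_succ {i j : Fin n} (hij : i ≤ j)
    (h : ∀ k k' : Fin n, i ≤ k → k' ≤ j → (k' : ℕ) = k + 1 → G.Reachable k k') :
    G.Reachable i j := by
  suffices ∀ m, (i : ℕ) ≤ m → ∀ hm : m ≤ j, G.Reachable i ⟨m, hm.trans_lt j.isLt⟩ from
    this j hij le_rfl
  intro m him
  induction m, him using Nat.le_induction with
  | base => exact fun _ => Reachable.refl _
  | succ m him ih =>
    intro hm
    exact (ih (by omega)).trans (h _ _ (Fin.le_def.mpr him) (Fin.le_def.mpr hm) rfl)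

theorem IsAdmissible.length_le_three (hG : G.IsAcyclic)
    (hsucc : ∀ i j : Fin n, (j : ℕ) = i + 1 → G.Adj i j ∨ ∃ k, G.Adj i k ∧ G.Adj k j)
    {l : List (Fin n)} (hl : IsAdmissible G l) : l.length ≤ 3 := by
  obtain ⟨i, j, hij, hhead, hlast, hpath, hout, -⟩ := hl
  by_contra! hlen
  rcases l with _ | ⟨a, _ | ⟨b, _ | ⟨c, _ | ⟨d, rest⟩⟩⟩⟩ <;> simp at hhead hlen
  subst hhead
  have hb := hout b (by simp)
  have hc := hout c (by simp)
  have hchain := hpath.isChain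
  rw [List.isChain_cons_cons, List.isChain_cons_cons] at hchain
  obtain ⟨hab, hbc, hchain⟩ := hchain
  set G' := G.deleteEdges {s(b, c)}
  have hG' : ∀ {x y}, G.Adj x y → s(x, y) ≠ s(b, c) → G'.Adj x y := fun h hne =>
    (deleteEdges_adj ..).mpr ⟨h, hne⟩
  have hG'_of_mem : ∀ {x y}, G.Adj x y → a ≤ x → x ≤ j → G'.Adj x y := fun h hax hxj =>
    hG' h (by simp; omega)
  have hcj : G'.Reachable c j := by
    have hbnot : b ∉ c :: d :: rest := (List.nodup_cons.mp (List.nodup_cons.mp hpath.2).2).1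
    refine (hchain.imp_of_mem_imp fun x y hx hy hxy => hG' hxy ?_).reachable (by simp) ?_
    · rintro hxy'
      rcases Sym2.eq_iff.mp hxy' with ⟨rfl, -⟩ | ⟨-, rfl⟩ <;> contradiction
    · exact List.mem_of_getLast? (by simpa using hlast)
  have haj : G'.Reachable a j :=
    reachable_of_forall_reachable_succ hij.le fun k k' hak hk'j hk' => by
      rcases hsucc k k' hk' with h | ⟨m, hkm, hmk'⟩
      · exact (hG'_of_mem h hak (by omega)).reachable
      · exact (hG'_of_mem hkm hak (by omega)).reachable.trans
          (hG'_of_mem hmk'.symm (by omega) hk'j).symm.reachable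
  have hba : G'.Reachable b a := (hG'_of_mem hab le_rfl hij.le).reachable.symm
  exact isAcyclic_iff_forall_adj_isBridge.mp hG hbc (hba.trans (haj.trans hcj.symm))

end Acyclic

theorem BipartiteConds.hstarGraph_adj_or_exists_adj_adj {n : ℕ} {E : Finset (Fin n × Fin n)}
    (hE : BipartiteConds E) (i j : Fin n) (hij : (j : ℕ) = i + 1) :
    (HstarGraph E).Adj i j ∨ ∃ k, (HstarGraph E).Adj i k ∧ (HstarGraph E).Adj k j := by
  have hadj : ∀ {u v}, (u, v) ∈ E → (HstarGraph E).Adj u v := fun huv =>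
    (fromEdgeSet_adj _).mpr ⟨mem_image_of_mem _ huv, (hE.1 _ huv).ne⟩
  rcases hE.2.1 i j hij with h | ⟨k, -, hik, hjk⟩ | ⟨k, -, hki, hkj⟩
  · exact Or.inl (hadj h)
  · exact Or.inr ⟨k, hadj hik, (hadj hjk).symm⟩
  · exact Or.inr ⟨k, (hadj hki).symm, hadj hkj⟩

/-- A tree on `{1,…,n}` which is not a path and is 3-closed is isomorphic to
`H_*` for some bipartite graph `H` satisfying the conditions above; and
conversely, if `H` satisfies the conditions and `H_*` is a tree which is not
a path, then `H_*` admits a labeling in which every admissible path has at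
most 3 vertices. -/
theorem three_closed_tree_iff_bipartite {n : ℕ} :
    (∀ T : SimpleGraph (Fin n), T.IsTree →
      (¬ ∀ v : Fin n, (T.neighborSet v).ncard ≤ 2) →
      ((∃ e : Fin n ≃ Fin n, ∀ l : List (Fin n),
          IsAdmissible (T.map e.toEmbedding) l → l.length ≤ 3) ∧
       (∀ e : Fin n ≃ Fin n, ∃ l : List (Fin n),
          IsAdmissible (T.map e.toEmbedding) l ∧ l.length = 3)) →
      ∃ E : Finset (Fin n × Fin n), BipartiteConds E ∧ Nonempty (T ≃g HstarGraph E)) ∧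
    (∀ E : Finset (Fin n × Fin n), BipartiteConds E → (HstarGraph E).IsTree →
      (¬ ∀ v : Fin n, ((HstarGraph E).neighborSet v).ncard ≤ 2) →
      ∃ e : Fin n ≃ Fin n, ∀ l : List (Fin n),
        IsAdmissible ((HstarGraph E).map e.toEmbedding) l → l.length ≤ 3) := by
  refine ⟨fun T hT _ ⟨⟨e, he⟩, _⟩ => ?_, fun E hE hT _ => ⟨Equiv.refl _, fun l hl => ?_⟩⟩
  · have hT' : (T.map e.toEmbedding).IsTree := (Iso.map e T).isTree_iff.mp hT
    refine ⟨_, bipartiteConds_ascendingEdges hT' he, ⟨?_⟩⟩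
    rw [hstarGraph_ascendingEdges]
    exact Iso.map e T
  · rw [Equiv.refl_toEmbedding, Function.Embedding.coe_refl, map_id] at hl
    exact hl.length_le_three hT.isAcyclic hE.hstarGraph_adj_or_exists_adj_adj
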